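/- arXiv:2104.09374 — 3 statements merged into one kernel-verified Lean document; each statement's English description precedes it below -/
import Mathlib

section
/- The type B alternating Eulerian numbers are palindromic: B̂(n,k) = B̂(n,n−k) for all n ≥ 0 and 0 ≤ k ≤ n. -/
open Finset

/-- Signed permutations of order `n` (the hyperoctahedral group), modeled as a
permutation of `Fin n` together with a sign for each position. -/
abbrev BSigned (n : ℕ) := Equiv.Perm (Fin n) × (Fin n → Bool)

/-- The word of a signed permutation: `bword σ j = σ(j)` for `1 ≤ j ≤ n`,
with the convention `σ(0) = 0`. -/
def bword {n : ℕ} (σ : BSigned n) (j : ℕ) : ℤ :=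
  if h : 1 ≤ j ∧ j ≤ n then
    (if σ.2 ⟨j - 1, by omega⟩ then -1 else 1) * ((σ.1 ⟨j - 1, by omega⟩ : ℕ) + 1)
  else 0

/-- The number of alternating descents of a signed permutation: the number of
`0 ≤ j ≤ n-1` such that `j` is even and `σ(j) < σ(j+1)`, or `j` is odd and `σ(j) > σ(j+1)`. -/
def altdesB {n : ℕ} (σ : BSigned n) : ℕ :=
  ((Finset.range n).filter (fun j => (Even j ∧ bword σ j < bword σ (j + 1)) ∨
      (Odd j ∧ bword σ (j + 1) < bword σ j))).card

/-- The type B alternating Eulerian number `B̂(n,k)`. -/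
def Bhat (n k : ℕ) : ℕ :=
  (Finset.univ.filter (fun σ : BSigned n => altdesB σ = k)).card

/-- The type B alternating Eulerian polynomial `B̂_n(x)` as a real function. -/
noncomputable def Bpoly (n : ℕ) (x : ℝ) : ℝ :=
  ∑ σ : BSigned n, x ^ altdesB σ

/-- The word of a permutation of `{1,…,n}`: `aword π j = π(j)` for `1 ≤ j ≤ n`,
with the convention `π(0) = 0`. -/
def aword {n : ℕ} (π : Equiv.Perm (Fin n)) (j : ℕ) : ℕ :=
  if h : 1 ≤ j ∧ j ≤ n then (π ⟨j - 1, by omega⟩ : ℕ) + 1 else 0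

/-- The number of alternating descents of a permutation: the number of
`1 ≤ j ≤ n-1` such that `j` is odd and `π(j) > π(j+1)`, or `j` is even and `π(j) < π(j+1)`. -/
def altdesA {n : ℕ} (π : Equiv.Perm (Fin n)) : ℕ :=
  ((Finset.Icc 1 (n - 1)).filter (fun j => (Odd j ∧ aword π (j + 1) < aword π j) ∨
      (Even j ∧ aword π j < aword π (j + 1)))).card

/-- The type A alternating Eulerian number `Â(n,k)`. -/
def Ahat (n k : ℕ) : ℕ :=
  (Finset.univ.filter (fun π : Equiv.Perm (Fin n) => altdesA π = k)).card

/-- The type A alternating Eulerian polynomial `Â_n(x)` as a real function. -/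
noncomputable def Apoly (n : ℕ) (x : ℝ) : ℝ :=
  ∑ π : Equiv.Perm (Fin n), x ^ altdesA π

/-- The number of left peaks of a permutation: indices `1 ≤ i ≤ n-1` with
`π(i-1) < π(i) > π(i+1)`, where `π(0) = 0`. -/
def lpk {n : ℕ} (π : Equiv.Perm (Fin n)) : ℕ :=
  ((Finset.Icc 1 (n - 1)).filter (fun i =>
      aword π (i - 1) < aword π i ∧ aword π (i + 1) < aword π i)).card

/-- `M n k` is the number of permutations of `{1,…,n}` with exactly `k` left peaks. -/
def M (n k : ℕ) : ℕ :=
  (Finset.univ.filter (fun π : Equiv.Perm (Fin n) => lpk π = k)).card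

/-- The derivative polynomials for secant: `Q 0 = 1`,
`Q (n+1) = x Q n + (1+x²) (Q n)'`. -/
noncomputable def Q : ℕ → Polynomial ℝ
  | 0 => 1
  | n + 1 => Polynomial.X * Q n + (1 + Polynomial.X ^ 2) * Polynomial.derivative (Q n)

/-- The coefficients `ξ_{n,i}` (terms with negative index vanish). -/
def xi : ℕ → ℤ → ℤ
  | 0, i => if i = 0 then 1 else 0
  | n + 1, i => (1 + 2 * (n : ℤ) - 6 * i) * xi n i + ((n : ℤ) - 2 * i + 2) * xi n (i - 1)
      - 4 * (i + 1) * xi n (i + 1)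

/-- The polynomial `ξ_n(x) = Σ_{i=0}^{⌊n/2⌋} ξ_{n,i} x^i` as a real function. -/
noncomputable def xiPoly (n : ℕ) (x : ℝ) : ℝ :=
  ∑ i ∈ Finset.range (n / 2 + 1), (xi n i : ℝ) * x ^ i

/-- A snake: a signed permutation with `σ(0) < σ(1) > σ(2) < σ(3) > ⋯`. -/
def IsSnake {n : ℕ} (σ : BSigned n) : Prop :=
  ∀ i : ℕ, (2 * i + 1 ≤ n → bword σ (2 * i) < bword σ (2 * i + 1)) ∧
    (2 * i + 2 ≤ n → bword σ (2 * i + 2) < bword σ (2 * i + 1))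

/-- The Springer number `s_n`: the number of snakes of order `n`. -/
noncomputable def springer (n : ℕ) : ℕ := Nat.card {σ : BSigned n // IsSnake σ}

/-- An alternating (down-up) permutation: `π(1) > π(2) < π(3) > ⋯`. -/
def IsAlternating {m : ℕ} (π : Equiv.Perm (Fin m)) : Prop :=
  ∀ j : ℕ, 1 ≤ j → j + 1 ≤ m →
    (Odd j → aword π (j + 1) < aword π j) ∧ (Even j → aword π j < aword π (j + 1))

/-- The secant number `E_{2n}`: the number of alternating permutations of `{1,…,2n}`. -/
noncomputable def secantNumber (n : ℕ) : ℕ :=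
  Nat.card {π : Equiv.Perm (Fin (2 * n)) // IsAlternating π}

/-- Negating all signs of a signed permutation. -/
def bneg {n : ℕ} (σ : BSigned n) : BSigned n := (σ.1, fun i => !σ.2 i)

lemma bneg_bneg {n : ℕ} (σ : BSigned n) : bneg (bneg σ) = σ := by
  simp [bneg]

lemma bword_bneg {n : ℕ} (σ : BSigned n) (j : ℕ) : bword (bneg σ) j = - bword σ j := by
  unfold bword bneg
  split
  · rcases Bool.eq_false_or_eq_true (σ.2 ⟨j - 1, by omega⟩) with h | h <;> simp [h] <;> ring
  · simp

lemma signed_ne (a b : ℕ) (s t : Bool) (h : a ≠ b) :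
    (if s then (-1 : ℤ) else 1) * ((a : ℤ) + 1) ≠ (if t then (-1 : ℤ) else 1) * ((b : ℤ) + 1) := by
  cases s <;> cases t <;> simp <;> omega

lemma bword_ne {n : ℕ} (σ : BSigned n) (j : ℕ) (hj : j < n) :
    bword σ j ≠ bword σ (j + 1) := by
  unfold bword
  have h1 : 1 ≤ j + 1 ∧ j + 1 ≤ n := ⟨by omega, by omega⟩
  rw [dif_pos h1]
  by_cases h0 : 1 ≤ j ∧ j ≤ n
  · rw [dif_pos h0]
    apply signed_ne
    intro h
    have h' := σ.1.injective (Fin.val_injective h)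
    have h'' : j - 1 = j + 1 - 1 := congrArg Fin.val h'
    omega
  · rw [dif_neg h0]
    split <;> simp only [neg_mul, one_mul, neg_one_mul] <;> push_cast <;> omega

lemma cond_flip {n : ℕ} (σ : BSigned n) (j : ℕ) (hj : j < n) :
    ((Even j ∧ bword (bneg σ) j < bword (bneg σ) (j + 1)) ∨
      (Odd j ∧ bword (bneg σ) (j + 1) < bword (bneg σ) j))
    ↔ ¬ ((Even j ∧ bword σ j < bword σ (j + 1)) ∨
      (Odd j ∧ bword σ (j + 1) < bword σ j)) := by
  have hne := bword_ne σ j hj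
  rw [bword_bneg, bword_bneg]
  rcases Nat.even_or_odd j with he | ho
  · have hno : ¬ Odd j := by simp [Nat.not_odd_iff_even, he]
    simp only [he, true_and, hno, false_and, or_false]
    omega
  · have hne' : ¬ Even j := by simp [Nat.not_even_iff_odd, ho]
    simp only [ho, true_and, hne', false_and, false_or]
    omega

lemma altdesB_bneg {n : ℕ} (σ : BSigned n) : altdesB (bneg σ) = n - altdesB σ := by
  unfold altdesB
  have hcongr : ((Finset.range n).filter (fun j => (Even j ∧ bword (bneg σ) j < bword (bneg σ) (j + 1)) ∨
      (Odd j ∧ bword (bneg σ) (j + 1) < bword (bneg σ) j))) =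
      ((Finset.range n).filter (fun j => ¬ ((Even j ∧ bword σ j < bword σ (j + 1)) ∨
      (Odd j ∧ bword σ (j + 1) < bword σ j)))) := by
    apply Finset.filter_congr
    intro j hj
    simpa using cond_flip σ j (Finset.mem_range.mp hj)
  rw [hcongr, Finset.filter_not, Finset.card_sdiff_of_subset (Finset.filter_subset _ _),
    Finset.card_range]

lemma altdesB_le {n : ℕ} (σ : BSigned n) : altdesB σ ≤ n := by
  unfold altdesB
  calc _ ≤ (Finset.range n).card := Finset.card_filter_le _ _
    _ = n := Finset.card_range n

/-- the type B alternating Eulerian numbers are palindromic: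
`B̂(n,k) = B̂(n,n-k)` for all `0 ≤ k ≤ n`. -/
theorem stmt4 (n k : ℕ) (hk : k ≤ n) : Bhat n k = Bhat n (n - k) := by
  unfold Bhat
  apply Finset.card_bij' (fun σ _ => bneg σ) (fun σ _ => bneg σ)
  · intro σ hσ
    simp only [Finset.mem_filter, Finset.mem_univ, true_and] at hσ ⊢
    rw [altdesB_bneg, hσ]
  · intro τ hτ
    simp only [Finset.mem_filter, Finset.mem_univ, true_and] at hτ ⊢
    rw [altdesB_bneg, hτ]
    omega
  · intro σ _; exact bneg_bneg σ
  · intro τ _; exact bneg_bneg τ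
end

section
/- In the ring of formal power series in z with coefficients in the polynomial ring ℚ[x], the identity (Σ_{n≥0} B̂_n(x) zⁿ/n!) · ((x−1)·C(z) − (x+1)·S(z)) = x−1 holds, where C(z) = Σ_{m≥0} (−1)^m (x−1)^{2m} z^{2m}/(2m)! and S(z) = Σ_{m≥0} (−1)^m (x−1)^{2m+1} z^{2m+1}/(2m+1)! (the formal expansions of cos(z(x−1)) and sin(z(x−1))). Equivalently, Σ_{n≥0} B̂_n(x) zⁿ/n! = (x−1)/((x−1)cos(z(x−1)) − (x+1)sin(z(x−1))). -/
open Finset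

/-- The type B alternating Eulerian polynomial `B̂_n(x)` as a polynomial over `ℚ`. -/
noncomputable def BpolyQ (n : ℕ) : Polynomial ℚ :=
  ∑ σ : BSigned n, Polynomial.X ^ altdesB σ

/-- The formal expansion of `cos(z(x-1))` as a power series in `z` over `ℚ[x]`. -/
noncomputable def cosSeries : PowerSeries (Polynomial ℚ) :=
  PowerSeries.mk fun j =>
    if Even j then
      Polynomial.C ((-1) ^ (j / 2) * ((j.factorial : ℚ)⁻¹)) * (Polynomial.X - 1) ^ j
    else 0

/-- The formal expansion of `sin(z(x-1))` as a power series in `z` over `ℚ[x]`. -/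
noncomputable def sinSeries : PowerSeries (Polynomial ℚ) :=
  PowerSeries.mk fun j =>
    if ¬ Even j then
      Polynomial.C ((-1) ^ ((j - 1) / 2) * ((j.factorial : ℚ)⁻¹)) * (Polynomial.X - 1) ^ j
    else 0

/-!
Inserting the letter `±(n+1)` into the word of a signed permutation `σ` of order `n` right after
position `i`, and negating every later letter, is a bijection `(σ, i, ±) ↦ σ'` onto signed
permutations of order `n + 1`. The negation undoes the parity shift of the later positions, so
away from the new letter the alternating descents of `σ'` are those of `σ` at positions `≠ i`,
and the new letter adds one or two more according to its sign and the parity of `i`. Summing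
gives `B̂_{n+1} = (1+x) B̂_n + (1+x²) (n B̂_n - (x-1) B̂_n')`.

The coefficients `D_j = j! [z^j] ((x-1) cos(z(x-1)) - (x+1) sin(z(x-1)))` obey the companion
recurrence `D_{j+1} = ((j+1)(1+x²) - (1+x)) D_j - (1+x²)(x-1) D_j'`, and for such a pair the
binomial convolution `T_n = Σ C(n,k) B̂_k D_{n-k}`, which is `n!` times the `n`-th coefficient of
the product, satisfies `T_{n+1} = (1+x²)((n+1) T_n - (x-1) T_n')`. As `T_0 = x - 1`, this forces
`T_n = 0` for `n ≥ 1`.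
-/

open Polynomial

section BinomialConvolution

variable {A : Type*} [CommRing A]

def binomConv (a b : ℕ → A) (n : ℕ) : A :=
  ∑ ij ∈ antidiagonal n, n.choose ij.1 • (a ij.1 * b ij.2)

theorem coeff_mul_egf [Algebra ℚ A] (a b : ℕ → A) (n : ℕ) :
    PowerSeries.coeff n (PowerSeries.mk (fun k => (k.factorial : ℚ)⁻¹ • a k) *
      PowerSeries.mk (fun k => (k.factorial : ℚ)⁻¹ • b k)) =
      (n.factorial : ℚ)⁻¹ • binomConv a b n := by
  rw [PowerSeries.coeff_mul, binomConv, Finset.smul_sum]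
  refine Finset.sum_congr rfl fun ij hij => ?_
  obtain rfl := mem_antidiagonal.mp hij
  have hfac : ((ij.1 + ij.2).factorial : ℚ)⁻¹ * (ij.1 + ij.2).choose ij.1 =
      (ij.1.factorial : ℚ)⁻¹ * (ij.2.factorial : ℚ)⁻¹ := by
    rw [Nat.choose_eq_factorial_div_factorial le_self_add, Nat.add_sub_cancel_left,
      Nat.cast_div (Nat.factorial_mul_factorial_dvd_factorial_add _ _) (by positivity)]
    field_simp
    push_cast
    ring
  simp only [PowerSeries.coeff_mk, smul_mul_smul_comm, ← Nat.cast_smul_eq_nsmul ℚ, smul_smul,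
    hfac]

variable {R : Type*} [CommSemiring R] [Algebra R A] (d : Derivation R A A) (p q r : A)

theorem binomConv_succ {a b : ℕ → A}
    (ha : ∀ n, a (n + 1) = p * a n + q * (n * a n - r * d (a n)))
    (hb : ∀ n, b (n + 1) = ((n + 1) * q - p) * b n - q * r * d (b n)) (n : ℕ) :
    binomConv a b (n + 1) = q * ((n + 1) * binomConv a b n - r * d (binomConv a b n)) := by
  rw [binomConv, Finset.sum_antidiagonal_choose_succ_nsmul (fun i j => a i * b j),
    ← Finset.sum_add_distrib, binomConv, map_sum, Finset.mul_sum, Finset.mul_sum,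
    ← Finset.sum_sub_distrib, Finset.mul_sum]
  refine Finset.sum_congr rfl fun ij hij => ?_
  obtain rfl := mem_antidiagonal.mp hij
  rw [← Nat.choose_symm_add, ha, hb, map_nsmul, Derivation.leibniz]
  simp only [nsmul_eq_mul, smul_eq_mul]
  push_cast
  ring

end BinomialConvolution

def IsAltDes (w : ℕ → ℤ) (j : ℕ) : Prop :=
  (Even j ∧ w j < w (j + 1)) ∨ (Odd j ∧ w (j + 1) < w j)

instance (w : ℕ → ℤ) : DecidablePred (IsAltDes w) := fun j => by
  unfold IsAltDes; infer_instance

theorem altdesB_eq_card {n : ℕ} (σ : BSigned n) :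
    altdesB σ = #{j ∈ range n | IsAltDes (bword σ) j} := rfl

theorem isAltDes_succ_iff_of_neg {w w' : ℕ → ℤ} {j : ℕ} (h₁ : w' (j + 1) = -w j)
    (h₂ : w' (j + 2) = -w (j + 1)) : IsAltDes w' (j + 1) ↔ IsAltDes w j := by
  simp only [IsAltDes, h₁, h₂, Nat.even_add_one, Nat.odd_add_one, Nat.not_even_iff_odd,
    Nat.not_odd_iff_even, neg_lt_neg_iff]
  tauto

theorem isAltDes_iff_of_abs_lt_right {w : ℕ → ℤ} {j : ℕ} (h : |w j| < |w (j + 1)|) :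
    IsAltDes w j ↔ (Even j ↔ 0 < w (j + 1)) := by
  unfold IsAltDes
  cases abs_cases (w j) <;> cases abs_cases (w (j + 1)) <;> grind

theorem isAltDes_iff_of_abs_lt_left {w : ℕ → ℤ} {j : ℕ} (h : |w (j + 1)| < |w j|) :
    IsAltDes w j ↔ (Even j ↔ w j < 0) := by
  unfold IsAltDes
  cases abs_cases (w j) <;> cases abs_cases (w (j + 1)) <;> grind

-- Positions `i` and `i + 1` of `Q` replace position `i` of `P`; later positions shift by one.
theorem card_filter_range_succ_of_shift {P Q : ℕ → Prop} [DecidablePred P] [DecidablePred Q]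
    {i n : ℕ} (hi : i ≤ n) (hlt : ∀ j < i, Q j ↔ P j)
    (hgt : ∀ j, i ≤ j → (Q (j + 2) ↔ P (j + 1))) :
    #{j ∈ range (n + 1) | Q j} = #{j ∈ range n | j ≠ i ∧ P j} + (if Q i then 1 else 0) +
      (if i < n ∧ Q (i + 1) then 1 else 0) := by
  have hpre : ∑ j ∈ range i, (if Q j then 1 else 0) =
      ∑ j ∈ range i, (if j ≠ i ∧ P j then 1 else 0) :=
    Finset.sum_congr rfl fun j hj => by
      have hj := Finset.mem_range.mp hj
      simp only [hlt j hj, hj.ne, ne_eq, not_false_eq_true, true_and]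
  obtain ⟨k, rfl⟩ := Nat.exists_eq_add_of_le hi
  rw [Finset.card_filter, Finset.card_filter]
  cases k with
  | zero =>
    rw [Finset.sum_range_succ, hpre]
    simp only [add_zero, lt_irrefl, false_and, if_false]
  | succ k =>
    have hpost : ∑ m ∈ range k, (if Q (i + (m + 2)) then 1 else 0) =
        ∑ m ∈ range k, (if i + (m + 1) ≠ i ∧ P (i + (m + 1)) then 1 else 0) :=
      Finset.sum_congr rfl fun m _ => by
        have hm := hgt (i + m) le_self_add
        rw [add_assoc, add_assoc] at hm
        simp only [hm, ne_eq, Nat.add_eq_left, Nat.add_one_ne_zero, not_false_eq_true, true_and]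
    rw [show i + (k + 1) + 1 = i + (k + 2) by ring, Finset.sum_range_add _ i (k + 2),
      Finset.sum_range_add _ i (k + 1), Finset.sum_range_succ', Finset.sum_range_succ',
      Finset.sum_range_succ', hpre, hpost]
    simp only [add_zero, ne_eq, not_true_eq_false, false_and, if_false, lt_add_iff_pos_right,
      Nat.succ_pos, true_and]
    ring

theorem sum_X_pow_card_filter_ne {R α : Type*} [CommRing R] [DecidableEq α] (s : Finset α)
    (P : α → Prop) [DecidablePred P] :
    ∑ i ∈ s, (X : R[X]) ^ #{j ∈ s | j ≠ i ∧ P j} =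
      (#s : R[X]) * X ^ #{j ∈ s | P j} - (X - 1) * derivative (X ^ #{j ∈ s | P j}) := by
  set F := {j ∈ s | P j}
  have hterm : ∀ i, (X : R[X]) ^ #{j ∈ s | j ≠ i ∧ P j} =
      X ^ #F - if i ∈ F then X ^ (#F - 1) * (X - 1) else 0 := fun i => by
    have herase : {j ∈ s | j ≠ i ∧ P j} = F.erase i := by
      ext j; simp only [Finset.mem_filter, Finset.mem_erase, F]; tauto
    rw [herase]
    split_ifs with hi
    · rw [Finset.card_erase_of_mem hi]
      nth_rw 2 [← Nat.sub_add_cancel (Finset.card_pos.mpr ⟨i, hi⟩)]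
      ring
    · rw [Finset.erase_eq_of_notMem hi, sub_zero]
  rw [Finset.sum_congr rfl fun i _ => hterm i, Finset.sum_sub_distrib, Finset.sum_const,
    Finset.sum_ite_mem, Finset.inter_eq_right.mpr (Finset.filter_subset _ _), Finset.sum_const,
    derivative_X_pow, C_eq_natCast, nsmul_eq_mul, nsmul_eq_mul]
  ring

section InsertMax

variable {n : ℕ}

theorem bword_of_pos_of_le {σ : BSigned n} {j : ℕ} (h₁ : 1 ≤ j) (h₂ : j ≤ n) :
    bword σ j =
      (if σ.2 ⟨j - 1, by omega⟩ then -1 else 1) * ((σ.1 ⟨j - 1, by omega⟩ : ℕ) + 1) :=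
  dif_pos ⟨h₁, h₂⟩

theorem bword_zero (σ : BSigned n) : bword σ 0 = 0 :=
  dif_neg (by omega)

theorem bword_of_lt {σ : BSigned n} {j : ℕ} (h : n < j) : bword σ j = 0 :=
  dif_neg (by omega)

theorem abs_bword_lt (σ : BSigned n) (j : ℕ) : |bword σ j| < n + 1 := by
  rw [abs_lt]
  unfold bword
  split
  · have := (σ.1 ⟨j - 1, by omega⟩).is_lt
    split <;> constructor <;> omega
  · constructor <;> omega

/-- Insert the letter `n + 1`, negated iff `ε`, into the word of `σ` right after position `i`,
and negate all later letters. -/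
def insertMax (σ : BSigned n) (i : Fin (n + 1)) (ε : Bool) : BSigned (n + 1) :=
  ((finSuccEquiv' i).trans ((Equiv.optionCongr σ.1).trans (finSuccEquiv' (Fin.last n)).symm),
    fun p => (finSuccEquiv' i p).elim ε fun q => xor (σ.2 q) (decide ((i : ℕ) ≤ q)))

variable (σ : BSigned n) (i : Fin (n + 1)) (ε : Bool)

@[simp]
theorem insertMax_fst_self : (insertMax σ i ε).1 i = Fin.last n := by
  simp [insertMax]

@[simp]
theorem insertMax_snd_self : (insertMax σ i ε).2 i = ε := by
  simp [insertMax]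

@[simp]
theorem insertMax_fst_succAbove (q : Fin n) :
    (insertMax σ i ε).1 (i.succAbove q) = (σ.1 q).castSucc := by
  simp [insertMax, Fin.succAbove_last]

@[simp]
theorem insertMax_snd_succAbove (q : Fin n) :
    (insertMax σ i ε).2 (i.succAbove q) = xor (σ.2 q) (decide ((i : ℕ) ≤ q)) := by
  simp [insertMax]

theorem bword_insertMax_of_le {j : ℕ} (hj : j ≤ i) :
    bword (insertMax σ i ε) j = bword σ j := by
  rcases Nat.eq_zero_or_pos j with rfl | hj₀
  · rw [bword_zero, bword_zero]
  have hpos : (⟨j - 1, by omega⟩ : Fin (n + 1)) = i.succAbove ⟨j - 1, by omega⟩ := by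
    rw [Fin.succAbove_of_castSucc_lt i _ (Fin.lt_def.mpr (by simp; omega))]; rfl
  rw [bword_of_pos_of_le hj₀ (by omega), bword_of_pos_of_le hj₀ (by omega), hpos,
    insertMax_fst_succAbove, insertMax_snd_succAbove]
  simp [show ¬(i : ℕ) ≤ j - 1 by omega]

theorem bword_insertMax_succ :
    bword (insertMax σ i ε) (i + 1) = (if ε then -1 else 1) * (n + 1) := by
  rw [bword_of_pos_of_le (by omega) (by omega)]
  simp

theorem bword_insertMax_add_two {j : ℕ} (hj : (i : ℕ) ≤ j) :
    bword (insertMax σ i ε) (j + 2) = -bword σ (j + 1) := by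
  by_cases hjn : j + 1 ≤ n
  · have hpos :
        (⟨j + 2 - 1, by omega⟩ : Fin (n + 1)) = i.succAbove ⟨j + 1 - 1, by omega⟩ := by
      rw [Fin.succAbove_of_le_castSucc i _ (Fin.le_def.mpr (by simp; omega))]; rfl
    rw [bword_of_pos_of_le (by omega) (by omega), bword_of_pos_of_le (by omega) hjn, hpos,
      insertMax_fst_succAbove, insertMax_snd_succAbove]
    cases σ.2 ⟨j + 1 - 1, by omega⟩ <;> simp [hj.not_gt]
  · rw [bword_of_lt (by omega), bword_of_lt (by omega), neg_zero]

theorem insertMax_bijective (n : ℕ) :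
    Function.Bijective fun t : BSigned n × Fin (n + 1) × Bool => insertMax t.1 t.2.1 t.2.2 := by
  rw [Fintype.bijective_iff_injective_and_card]
  refine ⟨?_, by
    simp only [Fintype.card_prod, Fintype.card_perm, Fintype.card_fun, Fintype.card_fin,
      Fintype.card_bool, Nat.factorial_succ]
    ring⟩
  rintro ⟨σ, i, ε⟩ ⟨σ', i', ε'⟩ h
  simp only [Prod.ext_iff] at h
  obtain ⟨hperm, hsign⟩ := h
  obtain rfl : i = i' := (insertMax σ' i' ε').1.injective <| by
    rw [insertMax_fst_self, ← hperm, insertMax_fst_self]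
  obtain rfl : ε = ε' := by simpa using congrFun hsign i
  have hσ₁ : σ.1 = σ'.1 := Equiv.ext fun q => Fin.castSucc_injective n <| by
    simpa using congrArg (· (i.succAbove q)) hperm
  have hσ₂ : σ.2 = σ'.2 := funext fun q => by simpa using congrFun hsign (i.succAbove q)
  rw [Prod.ext hσ₁ hσ₂]

theorem abs_bword_lt_abs_bword_insertMax_succ (j : ℕ) :
    |bword σ j| < |bword (insertMax σ i ε) (i + 1)| := by
  rw [bword_insertMax_succ, abs_mul, abs_of_pos (by positivity : (0 : ℤ) < n + 1)]
  cases ε <;> simpa using abs_bword_lt σ j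

theorem bword_insertMax_succ_pos_iff : 0 < bword (insertMax σ i ε) (i + 1) ↔ ε = false := by
  rw [bword_insertMax_succ]
  cases ε <;> simp

theorem altdesB_insertMax :
    altdesB (insertMax σ i ε) = #{j ∈ range n | j ≠ (i : ℕ) ∧ IsAltDes (bword σ) j} +
      if (Even (i : ℕ) ↔ ε = false) then (if (i : ℕ) < n then 2 else 1) else 0 := by
  have hbig := abs_bword_lt_abs_bword_insertMax_succ σ i ε
  have hpos := bword_insertMax_succ_pos_iff σ i ε
  have hat : IsAltDes (bword (insertMax σ i ε)) i ↔ (Even (i : ℕ) ↔ ε = false) := by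
    rw [isAltDes_iff_of_abs_lt_right, hpos]
    rw [bword_insertMax_of_le σ i ε le_rfl]
    exact hbig i
  have hnext :
      IsAltDes (bword (insertMax σ i ε)) (i + 1) ↔ (Even (i : ℕ) ↔ ε = false) := by
    have hne : bword (insertMax σ i ε) (i + 1) ≠ 0 := fun h0 =>
      (abs_nonneg (bword σ 0)).not_gt (by simpa [h0] using hbig 0)
    have hneg :
        bword (insertMax σ i ε) (i + 1) < 0 ↔ ¬0 < bword (insertMax σ i ε) (i + 1) := by
      omega
    rw [isAltDes_iff_of_abs_lt_left, Nat.even_add_one, ← hpos, hneg]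
    · tauto
    · rw [bword_insertMax_add_two σ i ε le_rfl, abs_neg]
      exact hbig _
  rw [altdesB_eq_card, card_filter_range_succ_of_shift i.is_le (P := IsAltDes (bword σ))
    (fun j hj => ?_) (fun j hj => ?_)]
  · by_cases hc : Even (i : ℕ) ↔ ε = false <;> by_cases hin : (i : ℕ) < n <;>
      simp [hat, hnext, hc, hin]
  · simp only [IsAltDes, bword_insertMax_of_le σ i ε hj.le, bword_insertMax_of_le σ i ε hj]
  · exact isAltDes_succ_iff_of_neg (bword_insertMax_add_two σ i ε hj)
      (bword_insertMax_add_two σ i ε (hj.trans j.le_succ))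

end InsertMax

theorem sum_bool_X_pow_altdesB_insertMax {n : ℕ} (σ : BSigned n) (i : Fin (n + 1)) :
    ∑ ε : Bool, (X : ℚ[X]) ^ altdesB (insertMax σ i ε) =
      (1 + X ^ (if (i : ℕ) < n then 2 else 1)) *
        X ^ #{j ∈ range n | j ≠ (i : ℕ) ∧ IsAltDes (bword σ) j} := by
  simp only [Fintype.sum_bool, altdesB_insertMax, pow_add]
  by_cases hi : Even (i : ℕ) <;> by_cases hn : (i : ℕ) < n <;> simp [hi, hn] <;> ring

theorem sum_X_pow_altdesB_insertMax {n : ℕ} (σ : BSigned n) :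
    ∑ i : Fin (n + 1), ∑ ε : Bool, (X : ℚ[X]) ^ altdesB (insertMax σ i ε) =
      (1 + X) * X ^ altdesB σ +
        (1 + X ^ 2) * ((n : ℚ[X]) * X ^ altdesB σ - (X - 1) * derivative (X ^ altdesB σ)) := by
  have hlast : #{j ∈ range n | j ≠ n ∧ IsAltDes (bword σ) j} = altdesB σ := by
    rw [altdesB_eq_card]
    congr 1
    exact Finset.filter_congr fun j hj => by simp [(Finset.mem_range.mp hj).ne]
  simp only [sum_bool_X_pow_altdesB_insertMax, Fin.sum_univ_castSucc, Fin.val_castSucc,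
    Fin.is_lt, if_true, Fin.val_last, lt_irrefl, if_false, hlast, pow_one]
  rw [← Finset.mul_sum, Fin.sum_univ_eq_sum_range
    (fun k => (X : ℚ[X]) ^ #{j ∈ range n | j ≠ k ∧ IsAltDes (bword σ) j}),
    sum_X_pow_card_filter_ne, Finset.card_range, ← altdesB_eq_card]
  ring

theorem BpolyQ_succ (n : ℕ) :
    BpolyQ (n + 1) = (1 + X) * BpolyQ n +
      (1 + X ^ 2) * ((n : ℚ[X]) * BpolyQ n - (X - 1) * derivative (BpolyQ n)) := by
  have hsplit : BpolyQ (n + 1) =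
      ∑ σ : BSigned n, ∑ i : Fin (n + 1), ∑ ε : Bool, X ^ altdesB (insertMax σ i ε) := by
    rw [BpolyQ, ← Fintype.sum_bijective _ (insertMax_bijective n) _ _ fun _ => rfl]
    simp only [Fintype.sum_prod_type]
  rw [hsplit]
  simp only [sum_X_pow_altdesB_insertMax, Finset.sum_add_distrib, BpolyQ, map_sum,
    Finset.mul_sum]
  rw [← Finset.sum_sub_distrib, Finset.mul_sum]

theorem BpolyQ_zero : BpolyQ 0 = 1 := by
  simp [BpolyQ, altdesB]

noncomputable def denomCoeff (j : ℕ) : ℚ[X] :=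
  if Even j then (-1) ^ (j / 2) * (X - 1) ^ (j + 1)
  else -(-1) ^ (j / 2) * ((X + 1) * (X - 1) ^ j)

theorem coeff_C_mul_cosSeries_sub_C_mul_sinSeries (j : ℕ) :
    PowerSeries.coeff j (PowerSeries.C (X - 1 : ℚ[X]) * cosSeries -
      PowerSeries.C (X + 1 : ℚ[X]) * sinSeries) = (j.factorial : ℚ)⁻¹ • denomCoeff j := by
  rw [map_sub, PowerSeries.coeff_C_mul, PowerSeries.coeff_C_mul, cosSeries, sinSeries,
    PowerSeries.coeff_mk, PowerSeries.coeff_mk, denomCoeff, smul_eq_C_mul]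
  split_ifs with hj
  · simp only [map_mul, map_pow, map_neg, map_one]; ring
  · rw [show (j - 1) / 2 = j / 2 by grind]
    simp only [map_mul, map_pow, map_neg, map_one]; ring

theorem denomCoeff_two_mul (m : ℕ) : denomCoeff (2 * m) = (-1) ^ m * (X - 1) ^ (2 * m + 1) := by
  simp [denomCoeff]

theorem denomCoeff_two_mul_add_one (m : ℕ) :
    denomCoeff (2 * m + 1) = -(-1) ^ m * ((X + 1) * (X - 1) ^ (2 * m + 1)) := by
  simp [denomCoeff, show (2 * m + 1) / 2 = m by omega]

theorem denomCoeff_succ (j : ℕ) :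
    denomCoeff (j + 1) = (((j : ℚ[X]) + 1) * (1 + X ^ 2) - (1 + X)) * denomCoeff j -
      (1 + X ^ 2) * (X - 1) * derivative (denomCoeff j) := by
  obtain ⟨m, rfl | rfl⟩ := Nat.even_or_odd' j
  · rw [denomCoeff_two_mul_add_one, denomCoeff_two_mul]
    simp only [derivative_mul, derivative_pow, derivative_neg, derivative_one, derivative_sub,
      derivative_X, C_eq_natCast]
    push_cast
    ring
  · rw [show 2 * m + 1 + 1 = 2 * (m + 1) by ring, denomCoeff_two_mul, denomCoeff_two_mul_add_one]
    simp only [derivative_mul, derivative_pow, derivative_neg, derivative_one, derivative_sub,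
      derivative_add, derivative_X, C_eq_natCast]
    push_cast
    ring

theorem binomConv_BpolyQ_denomCoeff_zero : binomConv BpolyQ denomCoeff 0 = X - 1 := by
  simp [binomConv, BpolyQ_zero, denomCoeff]

theorem binomConv_BpolyQ_denomCoeff_succ (n : ℕ) : binomConv BpolyQ denomCoeff (n + 1) = 0 := by
  have hstep := binomConv_succ (derivative' (R := ℚ)) (1 + X) (1 + X ^ 2) (X - 1)
    (a := BpolyQ) (b := denomCoeff)
    (fun n => by rw [derivative'_apply]; exact BpolyQ_succ n)
    (fun j => by rw [derivative'_apply]; exact denomCoeff_succ j)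
  induction n with
  | zero => simp [hstep, binomConv_BpolyQ_denomCoeff_zero]
  | succ n ih => rw [hstep, ih, map_zero, mul_zero, mul_zero, sub_zero, mul_zero]

/-- the exponential generating function identity
`(Σ_{n≥0} B̂_n(x) zⁿ/n!) · ((x-1)cos(z(x-1)) - (x+1)sin(z(x-1))) = x - 1`
in formal power series in `z` over `ℚ[x]`. -/
theorem stmt6 :
    (PowerSeries.mk fun n => Polynomial.C ((n.factorial : ℚ)⁻¹) * BpolyQ n) *
      (PowerSeries.C (R := Polynomial ℚ) (Polynomial.X - 1) * cosSeries -
        PowerSeries.C (R := Polynomial ℚ) (Polynomial.X + 1) * sinSeries) =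
      PowerSeries.C (R := Polynomial ℚ) (Polynomial.X - 1) := by
  have hB : (PowerSeries.mk fun n => C ((n.factorial : ℚ)⁻¹) * BpolyQ n) =
      PowerSeries.mk fun n => (n.factorial : ℚ)⁻¹ • BpolyQ n := by
    simp only [smul_eq_C_mul]
  have hD : PowerSeries.C (X - 1 : ℚ[X]) * cosSeries - PowerSeries.C (X + 1) * sinSeries =
      PowerSeries.mk fun j => (j.factorial : ℚ)⁻¹ • denomCoeff j :=
    PowerSeries.ext fun j => by rw [coeff_C_mul_cosSeries_sub_C_mul_sinSeries, PowerSeries.coeff_mk]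
  ext n
  rw [hB, hD, coeff_mul_egf, PowerSeries.coeff_C]
  cases n with
  | zero => simp [binomConv_BpolyQ_denomCoeff_zero]
  | succ n => simp [binomConv_BpolyQ_denomCoeff_succ]
end

section
/- For every n ≥ 0 and every real x ≠ −1, B̂_n(x) = (1+x)^n · M_n( (2+2x²)/(1+x)² ), where M_n is the left peak polynomial M_n(t) = Σ_{k=0}^{⌊n/2⌋} M(n,k) t^k. -/
open Finset

/-- The left peak polynomial `M_n(t) = Σ_{k=0}^{⌊n/2⌋} M(n,k) t^k`. -/
noncomputable def Mpoly (n : ℕ) (t : ℝ) : ℝ :=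
  ∑ k ∈ Finset.range (n / 2 + 1), (M n k : ℝ) * t ^ k


section Aux

/-- Signed value word built from an unsigned word `a` and a sign vector. -/
def sv {m : ℕ} (a : ℕ → ℕ) (ε : Fin m → Bool) (j : ℕ) : ℤ :=
  if h : 1 ≤ j ∧ j ≤ m then (if ε ⟨j - 1, by omega⟩ then -1 else 1) * (a j : ℤ) else 0

/-- Alternating-descent condition at position `j`. -/
def acond {m : ℕ} (a : ℕ → ℕ) (ε : Fin m → Bool) (j : ℕ) : Prop :=
  (Even j ∧ sv a ε j < sv a ε (j + 1)) ∨ (Odd j ∧ sv a ε (j + 1) < sv a ε j)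

instance {m : ℕ} (a : ℕ → ℕ) (ε : Fin m → Bool) (j : ℕ) : Decidable (acond a ε j) := by
  unfold acond; infer_instance

/-- Weight of position `j`. -/
noncomputable def wt (x : ℝ) {m : ℕ} (a : ℕ → ℕ) (ε : Fin m → Bool) (j : ℕ) : ℝ :=
  if acond a ε j then x else 1

/-- Ascent indicator of the unsigned word, with boundary value `true` at `n`. -/
def cb (n : ℕ) (a : ℕ → ℕ) (j : ℕ) : Bool :=
  if j < n then decide (a j < a (j + 1)) else true

/-- The local factor. -/
noncomputable def fac (x : ℝ) (n : ℕ) (a : ℕ → ℕ) (j : ℕ) : ℝ :=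
  if cb n a j then (if cb n a (j + 1) then 1 + x else 1 + x ^ 2)
  else (if cb n a (j + 1) then 2 else 1 + x)

/-- The boundary row vector. -/
noncomputable def vrow (x : ℝ) (n : ℕ) (a : ℕ → ℕ) (m : ℕ) (s : Bool) : ℝ :=
  if cb n a m then (if Even m then (if s then 1 else x) else (if s then x else 1)) else 1

theorem sv_snoc {m : ℕ} (a : ℕ → ℕ) (ε : Fin (m + 1) → Bool) (b : Bool) (j : ℕ)
    (hj : j ≤ m + 1) : sv a (Fin.snoc ε b) j = sv a ε j := by
  unfold sv
  rcases Nat.eq_zero_or_pos j with h | h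
  · subst h; simp
  · rw [dif_pos ⟨h, by omega⟩, dif_pos ⟨h, hj⟩]
    congr 2
    have : (⟨j - 1, by omega⟩ : Fin (m + 2)) = Fin.castSucc ⟨j - 1, by omega⟩ := rfl
    rw [this, Fin.snoc_castSucc]

theorem sv_last {m : ℕ} (a : ℕ → ℕ) (ε : Fin (m + 1) → Bool) (b : Bool) :
    sv a (Fin.snoc ε b) (m + 2) = (if b then -1 else 1) * (a (m + 2) : ℤ) := by
  unfold sv
  rw [dif_pos ⟨by omega, le_refl _⟩]
  congr 2
  have : (⟨m + 2 - 1, by omega⟩ : Fin (m + 2)) = Fin.last (m + 1) := rfl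
  rw [this, Fin.snoc_last]


theorem scalar_abs (x : ℝ) (A B : ℤ) (h1 : 1 ≤ A) (h2 : 1 ≤ B) (hne : A ≠ B)
    (cm p s : Bool) :
    (if cm then (if p then x else 1) else 1) *
      (if (p = false ∧ 1 * A < (if s then -1 else 1) * B) ∨
          (p = true ∧ (if s then -1 else 1) * B < 1 * A) then x else 1)
    + (if cm then (if p then 1 else x) else 1) *
      (if (p = false ∧ -1 * A < (if s then -1 else 1) * B) ∨
          (p = true ∧ (if s then -1 else 1) * B < -1 * A) then x else 1)
    = (if cm then (if A < B then 1 + x else 1 + x ^ 2) else (if A < B then 2 else 1 + x)) *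
      (if A < B then (if p then (if s then x else 1) else (if s then 1 else x)) else 1) := by
  have g1 : ¬ (A < -B) := by omega
  have g2 : -A < B := by omega
  by_cases hAB : A < B
  · have g3 : (-A < -B) = False := by simp; omega
    have g4 : (A < B) = True := by simp [hAB]
    have g5 : ¬ (B < -A) := by omega
    have g6 : -B < A := by omega
    have g7 : (-B < -A) = True := by simp; omega
    have g8 : (B < A) = False := by simp; omega
    cases cm <;> cases p <;> cases s <;>
      simp [one_mul, neg_one_mul, g1, g2, g3, g4, g5, g6, g7, g8, hAB] <;> ring
  · have hBA : B < A := by omega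
    have g3 : (-A < -B) = True := by simp; omega
    have g4 : (A < B) = False := by simp [hAB]
    have g5 : ¬ (B < -A) := by omega
    have g6 : -B < A := by omega
    have g7 : (-B < -A) = False := by simp; omega
    have g8 : (B < A) = True := by simp [hBA]
    cases cm <;> cases p <;> cases s <;>
      simp [one_mul, neg_one_mul, g1, g2, g3, g4, g5, g6, g7, g8, hAB, hBA] <;> ring

/-- The weight of the last comparison, as a function of the two adjacent signs. -/
noncomputable def stepw (x : ℝ) (a : ℕ → ℕ) (m : ℕ) (t s : Bool) : ℝ :=
  if (Even (m + 1) ∧ (if t then (-1 : ℤ) else 1) * (a (m + 1) : ℤ) <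
        (if s then (-1 : ℤ) else 1) * (a (m + 2) : ℤ)) ∨
     (Odd (m + 1) ∧ (if s then (-1 : ℤ) else 1) * (a (m + 2) : ℤ) <
        (if t then (-1 : ℤ) else 1) * (a (m + 1) : ℤ))
  then x else 1

theorem cb_lt (n : ℕ) (a : ℕ → ℕ) (j : ℕ) (h : j < n) :
    cb n a j = decide (a j < a (j + 1)) := by unfold cb; rw [if_pos h]

theorem sv_eq {m : ℕ} (a : ℕ → ℕ) (ε : Fin (m + 1) → Bool) :
    sv a ε (m + 1) = (if ε (Fin.last m) then -1 else 1) * (a (m + 1) : ℤ) := by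
  unfold sv
  rw [dif_pos ⟨by omega, le_rfl⟩]
  rfl

theorem sv_zero {m : ℕ} (a : ℕ → ℕ) (ε : Fin m → Bool) : sv a ε 0 = 0 := by
  unfold sv
  rw [dif_neg (by omega)]

theorem sv_one {m : ℕ} (a : ℕ → ℕ) (ε : Fin (m + 1) → Bool) :
    sv a ε 1 = (if ε ⟨0, by omega⟩ then -1 else 1) * (a 1 : ℤ) := by
  unfold sv
  rw [dif_pos ⟨le_rfl, by omega⟩]

theorem acond_zero {m : ℕ} (a : ℕ → ℕ) (ε : Fin m → Bool) :
    acond a ε 0 ↔ sv a ε 0 < sv a ε 1 := by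
  unfold acond
  simp [Nat.odd_iff]

theorem step_eq (x : ℝ) (n : ℕ) (a : ℕ → ℕ) (m : ℕ) (hm : m + 2 ≤ n)
    (hA : 1 ≤ a (m + 1)) (hB : 1 ≤ a (m + 2)) (hne : a (m + 1) ≠ a (m + 2)) (s : Bool) :
    vrow x n a m false * stepw x a m false s + vrow x n a m true * stepw x a m true s
      = fac x n a m * vrow x n a (m + 1) s := by
  unfold stepw vrow fac
  rw [cb_lt n a m (by omega), cb_lt n a (m + 1) (by omega)]
  simp only [show m + 1 + 1 = m + 2 from rfl]
  have h1 : (1 : ℤ) ≤ (a (m + 1) : ℤ) := by exact_mod_cast hA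
  have h2 : (1 : ℤ) ≤ (a (m + 2) : ℤ) := by exact_mod_cast hB
  have hne' : (a (m + 1) : ℤ) ≠ (a (m + 2) : ℤ) := by exact_mod_cast hne
  generalize hAg : (a (m + 1) : ℤ) = A at *
  generalize hBg : (a (m + 2) : ℤ) = B at *
  have hcast : a (m + 1) < a (m + 2) ↔ A < B := by
    rw [← hAg, ← hBg]; exact_mod_cast Iff.rfl
  have k1 : ¬ (A < -B) := by omega
  have k2 : -A < B := by omega
  have k3 : ¬ (B < -A) := by omega
  have k4 : -B < A := by omega
  by_cases hAB : A < B
  · have hab : a (m + 1) < a (m + 2) := hcast.mpr hAB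
    have k5 : ¬ (B < A) := by omega
    rcases Nat.even_or_odd m with he | he
    · have hE : ¬ Even (m + 1) := by simp [Nat.even_add_one, he]
      have hO : Odd (m + 1) := Even.add_one he
      by_cases hcm : a m < a (m + 1) <;> cases s <;>
        simp [hab, hAB, hcm, he, hE, hO, k1, k2, k3, k4, k5] <;> ring
    · have hE : Even (m + 1) := Odd.add_one he
      have hem : ¬ Even m := Nat.not_even_iff_odd.mpr he
      have hO : ¬ Odd (m + 1) := by simp [Nat.not_odd_iff_even, hE]
      by_cases hcm : a m < a (m + 1) <;> cases s <;>
        simp [hab, hAB, hcm, hem, hE, hO, k1, k2, k3, k4, k5] <;> ring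
  · have hab : ¬ a (m + 1) < a (m + 2) := fun h => hAB (hcast.mp h)
    have k5 : B < A := by omega
    rcases Nat.even_or_odd m with he | he
    · have hE : ¬ Even (m + 1) := by simp [Nat.even_add_one, he]
      have hO : Odd (m + 1) := Even.add_one he
      by_cases hcm : a m < a (m + 1) <;> cases s <;>
        simp [hab, hAB, hcm, he, hE, hO, k1, k2, k3, k4, k5] <;> ring
    · have hE : Even (m + 1) := Odd.add_one he
      have hem : ¬ Even m := Nat.not_even_iff_odd.mpr he
      have hO : ¬ Odd (m + 1) := by simp [Nat.not_odd_iff_even, hE]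
      by_cases hcm : a m < a (m + 1) <;> cases s <;>
        simp [hab, hAB, hcm, hem, hE, hO, k1, k2, k3, k4, k5] <;> ring

theorem strong (x : ℝ) (n : ℕ) (a : ℕ → ℕ)
    (h0 : a 0 = 0)
    (h1 : ∀ j, 1 ≤ j → j ≤ n → 1 ≤ a j)
    (h2 : ∀ j, 1 ≤ j → j + 1 ≤ n → a j ≠ a (j + 1)) :
    ∀ m, m + 1 ≤ n → ∀ s : Bool,
      (∑ ε : Fin (m + 1) → Bool,
        if ε (Fin.last m) = s then ∏ j ∈ Finset.range (m + 1), wt x a ε j else 0)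
      = (∏ j ∈ Finset.range m, fac x n a j) * vrow x n a m s := by
  intro m
  induction m with
  | zero =>
    intro hn s
    have ha1 : 1 ≤ a 1 := h1 1 le_rfl hn
    have ha01 : a 0 < a 1 := by omega
    have ha1' : (0 : ℤ) < (a 1 : ℤ) := by exact_mod_cast ha1
    rw [← Equiv.sum_comp (Equiv.funUnique (Fin 1) Bool).symm, Fintype.sum_bool]
    have hval : ∀ b : Bool, ((Equiv.funUnique (Fin 1) Bool).symm b) (Fin.last 0) = b :=
      fun b => rfl
    have hw : ∀ b : Bool,
        (∏ j ∈ Finset.range 1, wt x a ((Equiv.funUnique (Fin 1) Bool).symm b) j)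
          = if b then 1 else x := by
      intro b
      rw [Finset.prod_range_one]
      unfold wt
      simp only [acond_zero, sv_zero, sv_one]
      have happ : ((Equiv.funUnique (Fin 1) Bool).symm b) ⟨0, by omega⟩ = b := rfl
      rw [happ]
      cases b
      · simp only [Bool.false_eq_true, if_false, one_mul, if_pos ha1']
      · rw [if_neg (by simp)]
        simp
    simp only [hval, hw]
    have hcb : cb n a 0 = true := by
      rw [cb_lt n a 0 (by omega)]; simpa using ha01
    unfold vrow
    rw [hcb, Finset.prod_range_zero]
    cases s <;> simp [Even.zero]
  | succ m ih =>
    intro hn s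
    have hn' : m + 1 ≤ n := by omega
    have hA : 1 ≤ a (m + 1) := h1 _ (by omega) (by omega)
    have hB : 1 ≤ a (m + 2) := h1 _ (by omega) (by omega)
    have hABne : a (m + 1) ≠ a (m + 2) := by
      have := h2 (m + 1) (by omega) (by omega); simpa using this
    rw [← Equiv.sum_comp (Fin.snocEquiv (fun _ : Fin (m + 2) => Bool)),
      Fintype.sum_prod_type]
    have prodsplit : ∀ (ε' : Fin (m + 1) → Bool) (b : Bool),
        (∏ j ∈ Finset.range (m + 2), wt x a (Fin.snoc ε' b) j)
          = (∏ j ∈ Finset.range (m + 1), wt x a ε' j) * stepw x a m (ε' (Fin.last m)) b := by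
      intro ε' b
      rw [Finset.prod_range_succ]
      congr 1
      · refine Finset.prod_congr rfl ?_
        intro j hj
        have hj' : j < m + 1 := Finset.mem_range.mp hj
        unfold wt acond
        simp only [sv_snoc a ε' b j (by omega), sv_snoc a ε' b (j + 1) (by omega)]
      · unfold wt acond stepw
        simp only [show m + 1 + 1 = m + 2 from rfl, sv_snoc a ε' b (m + 1) (by omega),
          sv_last a ε' b, sv_eq a ε']
    have main : ∀ (b : Bool) (ε' : Fin (m + 1) → Bool),
        (if (Fin.snocEquiv (fun _ : Fin (m + 2) => Bool)) (b, ε') (Fin.last (m + 1)) = s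
          then ∏ j ∈ Finset.range (m + 2),
            wt x a ((Fin.snocEquiv (fun _ : Fin (m + 2) => Bool)) (b, ε')) j else 0)
        = if b = s then
            (∏ j ∈ Finset.range (m + 1), wt x a ε' j) * stepw x a m (ε' (Fin.last m)) b
          else 0 := by
      intro b ε'
      have he : (Fin.snocEquiv (fun _ : Fin (m + 2) => Bool)) (b, ε') = Fin.snoc ε' b := rfl
      simp only [he, Fin.snoc_last, prodsplit]
    simp only [main]
    rw [Finset.sum_comm]
    simp only [Finset.sum_ite_eq', Finset.mem_univ, if_true]
    have split : ∀ ε' : Fin (m + 1) → Bool,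
        (∏ j ∈ Finset.range (m + 1), wt x a ε' j) * stepw x a m (ε' (Fin.last m)) s
        = (if ε' (Fin.last m) = false then ∏ j ∈ Finset.range (m + 1), wt x a ε' j else 0)
            * stepw x a m false s
          + (if ε' (Fin.last m) = true then ∏ j ∈ Finset.range (m + 1), wt x a ε' j else 0)
            * stepw x a m true s := by
      intro ε'
      cases hb : ε' (Fin.last m) <;> simp [hb]
    rw [Finset.sum_congr rfl (fun ε' _ => split ε'), Finset.sum_add_distrib,
      ← Finset.sum_mul, ← Finset.sum_mul, ih hn' false, ih hn' true,
      Finset.prod_range_succ]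
    linear_combination (∏ j ∈ Finset.range m, fac x n a j) * step_eq x n a m hn hA hB hABne s

theorem key (x : ℝ) (n : ℕ) (a : ℕ → ℕ) (h0 : a 0 = 0)
    (h1 : ∀ j, 1 ≤ j → j ≤ n → 1 ≤ a j)
    (h2 : ∀ j, 1 ≤ j → j + 1 ≤ n → a j ≠ a (j + 1)) :
    (∑ ε : Fin n → Bool, ∏ j ∈ Finset.range n, wt x a ε j)
      = ∏ j ∈ Finset.range n, fac x n a j := by
  cases n with
  | zero => simp
  | succ m =>
    have splitg : ∀ ε : Fin (m + 1) → Bool,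
        (∏ j ∈ Finset.range (m + 1), wt x a ε j)
          = (if ε (Fin.last m) = false then ∏ j ∈ Finset.range (m + 1), wt x a ε j else 0)
            + (if ε (Fin.last m) = true then ∏ j ∈ Finset.range (m + 1), wt x a ε j else 0) := by
      intro ε; cases hb : ε (Fin.last m) <;> simp [hb]
    rw [Finset.sum_congr rfl (fun ε _ => splitg ε), Finset.sum_add_distrib,
      strong x (m + 1) a h0 h1 h2 m le_rfl false, strong x (m + 1) a h0 h1 h2 m le_rfl true,
      Finset.prod_range_succ]
    have hcbn : cb (m + 1) a (m + 1) = true := by unfold cb; rw [if_neg (by omega)]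
    unfold vrow fac
    rw [hcbn]
    rcases Nat.even_or_odd m with he | he
    · cases hcb : cb (m + 1) a m <;> simp [hcb, he] <;> ring
    · have hem : ¬ Even m := Nat.not_even_iff_odd.mpr he
      cases hcb : cb (m + 1) a m <;> simp [hcb, hem] <;> ring

theorem balance (n : ℕ) (a : ℕ → ℕ) (hc0 : cb n a 0 = true) :
    ((Finset.range n).filter (fun j => cb n a j = true ∧ cb n a (j + 1) = false)).card
      = ((Finset.range n).filter (fun j => cb n a j = false ∧ cb n a (j + 1) = true)).card := by
  have hcn : cb n a n = true := by unfold cb; rw [if_neg (by omega)]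
  have hz : ∀ c d : Bool,
      ((if (c = true ∧ d = false) then (1 : ℤ) else 0) -
        (if (c = false ∧ d = true) then (1 : ℤ) else 0))
      = (if c = true then (1 : ℤ) else 0) - (if d = true then (1 : ℤ) else 0) := by decide
  have hsum : (∑ j ∈ Finset.range n,
      ((if (cb n a j = true ∧ cb n a (j + 1) = false) then (1 : ℤ) else 0) -
        (if (cb n a j = false ∧ cb n a (j + 1) = true) then (1 : ℤ) else 0))) = 0 := by
    calc (∑ j ∈ Finset.range n,
        ((if (cb n a j = true ∧ cb n a (j + 1) = false) then (1 : ℤ) else 0) -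
          (if (cb n a j = false ∧ cb n a (j + 1) = true) then (1 : ℤ) else 0)))
        = ∑ j ∈ Finset.range n,
            ((if cb n a j = true then (1 : ℤ) else 0) -
              (if cb n a (j + 1) = true then (1 : ℤ) else 0)) :=
          Finset.sum_congr rfl (fun j _ => hz _ _)
      _ = (if cb n a 0 = true then (1 : ℤ) else 0) - (if cb n a n = true then (1 : ℤ) else 0) :=
          Finset.sum_range_sub' (fun j => if cb n a j = true then (1 : ℤ) else 0) n
      _ = 0 := by rw [hc0, hcn]; simp
  rw [Finset.sum_sub_distrib] at hsum
  have h1 := (Finset.card_filter (fun j => cb n a j = true ∧ cb n a (j + 1) = false)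
    (Finset.range n))
  have h2 := (Finset.card_filter (fun j => cb n a j = false ∧ cb n a (j + 1) = true)
    (Finset.range n))
  have hcast : ∀ p : ℕ → Prop, ∀ _ : DecidablePred p,
      (((Finset.range n).filter p).card : ℤ) = ∑ j ∈ Finset.range n, (if p j then (1 : ℤ) else 0) := by
    intro p hp
    rw [Finset.card_filter]
    push_cast
    rfl
  have e1 := hcast (fun j => cb n a j = true ∧ cb n a (j + 1) = false) inferInstance
  have e2 := hcast (fun j => cb n a j = false ∧ cb n a (j + 1) = true) inferInstance
  omega

theorem disj_bound (n : ℕ) (a : ℕ → ℕ) :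
    ((Finset.range n).filter (fun j => cb n a j = true ∧ cb n a (j + 1) = false)).card
      + ((Finset.range n).filter (fun j => cb n a j = false ∧ cb n a (j + 1) = true)).card ≤ n := by
  have hd : Disjoint
      ((Finset.range n).filter (fun j => cb n a j = true ∧ cb n a (j + 1) = false))
      ((Finset.range n).filter (fun j => cb n a j = false ∧ cb n a (j + 1) = true)) := by
    rw [Finset.disjoint_left]
    intro j hj1 hj2
    have := (Finset.mem_filter.mp hj1).2.1
    have := (Finset.mem_filter.mp hj2).2.1
    simp_all
  calc _ = (((Finset.range n).filter (fun j => cb n a j = true ∧ cb n a (j + 1) = false))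
        ∪ ((Finset.range n).filter (fun j => cb n a j = false ∧ cb n a (j + 1) = true))).card :=
        (Finset.card_union_of_disjoint hd).symm
    _ ≤ (Finset.range n).card := Finset.card_le_card
        (Finset.union_subset (Finset.filter_subset _ _) (Finset.filter_subset _ _))
    _ = n := Finset.card_range n

theorem prod_fac (x : ℝ) (n : ℕ) (a : ℕ → ℕ) (hc0 : cb n a 0 = true) :
    (∏ j ∈ Finset.range n, fac x n a j)
      = (2 + 2 * x ^ 2) ^ (((Finset.range n).filter
            (fun j => cb n a j = true ∧ cb n a (j + 1) = false)).card)
        * (1 + x) ^ (n - 2 * (((Finset.range n).filter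
            (fun j => cb n a j = true ∧ cb n a (j + 1) = false)).card)) := by
  set L1 := ((Finset.range n).filter (fun j => cb n a j = true ∧ cb n a (j + 1) = false)).card
    with hL1
  set L2 := ((Finset.range n).filter (fun j => cb n a j = false ∧ cb n a (j + 1) = true)).card
    with hL2
  have hbal : L1 = L2 := balance n a hc0
  have hdb : L1 + L2 ≤ n := disj_bound n a
  rw [← Finset.prod_filter_mul_prod_filter_not (Finset.range n)
    (fun j => cb n a j = true ∧ cb n a (j + 1) = false)]
  have e1 : (∏ j ∈ (Finset.range n).filter
      (fun j => cb n a j = true ∧ cb n a (j + 1) = false), fac x n a j)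
      = (1 + x ^ 2) ^ L1 := by
    rw [Finset.prod_congr rfl (g := fun _ => 1 + x ^ 2) (fun j hj => by
      obtain ⟨-, hj1, hj2⟩ := Finset.mem_filter.mp hj
      unfold fac; rw [hj1, hj2]; simp), Finset.prod_const, hL1]
  have hsplit2 := Finset.prod_filter_mul_prod_filter_not
    ((Finset.range n).filter (fun j => ¬ (cb n a j = true ∧ cb n a (j + 1) = false)))
    (fun j => cb n a j = false ∧ cb n a (j + 1) = true) (fac x n a)
  have hff : ((Finset.range n).filter
        (fun j => ¬ (cb n a j = true ∧ cb n a (j + 1) = false))).filter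
        (fun j => cb n a j = false ∧ cb n a (j + 1) = true)
      = (Finset.range n).filter (fun j => cb n a j = false ∧ cb n a (j + 1) = true) := by
    rw [Finset.filter_filter]
    refine Finset.filter_congr ?_
    intro j _
    constructor
    · rintro ⟨-, h⟩; exact h
    · rintro ⟨hf, ht⟩; exact ⟨by simp [hf], hf, ht⟩
  have e2 : (∏ j ∈ ((Finset.range n).filter
      (fun j => ¬ (cb n a j = true ∧ cb n a (j + 1) = false))).filter
      (fun j => cb n a j = false ∧ cb n a (j + 1) = true), fac x n a j) = (2 : ℝ) ^ L2 := by
    rw [hff, Finset.prod_congr rfl (g := fun _ => (2 : ℝ)) (fun j hj => by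
      obtain ⟨-, hj1, hj2⟩ := Finset.mem_filter.mp hj
      unfold fac; rw [hj1, hj2]; simp), Finset.prod_const, hL2]
  have e3 : (∏ j ∈ ((Finset.range n).filter
      (fun j => ¬ (cb n a j = true ∧ cb n a (j + 1) = false))).filter
      (fun j => ¬ (cb n a j = false ∧ cb n a (j + 1) = true)), fac x n a j)
      = (1 + x) ^ (n - L1 - L2) := by
    rw [Finset.prod_congr rfl (g := fun _ => 1 + x) (fun j hj => by
      obtain ⟨hj1, hj2⟩ := Finset.mem_filter.mp hj
      obtain ⟨-, hj1⟩ := Finset.mem_filter.mp hj1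
      unfold fac
      cases hb1 : cb n a j <;> cases hb2 : cb n a (j + 1) <;> simp_all), Finset.prod_const]
    congr 1
    have c1 : (((Finset.range n).filter
        (fun j => ¬ (cb n a j = true ∧ cb n a (j + 1) = false))).filter
        (fun j => cb n a j = false ∧ cb n a (j + 1) = true)).card
        + (((Finset.range n).filter
        (fun j => ¬ (cb n a j = true ∧ cb n a (j + 1) = false))).filter
        (fun j => ¬ (cb n a j = false ∧ cb n a (j + 1) = true))).card
        = ((Finset.range n).filter
        (fun j => ¬ (cb n a j = true ∧ cb n a (j + 1) = false))).card :=
      Finset.card_filter_add_card_filter_not _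
    have c2 : L1 + ((Finset.range n).filter
        (fun j => ¬ (cb n a j = true ∧ cb n a (j + 1) = false))).card
        = n := by
      rw [hL1]
      rw [Finset.card_filter_add_card_filter_not
        (fun j => cb n a j = true ∧ cb n a (j + 1) = false), Finset.card_range]
    rw [hff] at c1
    omega
  rw [e1, ← hsplit2, e2, e3, ← hbal]
  have h2l : 2 * L1 ≤ n := by omega
  have : n - L1 - L1 = n - 2 * L1 := by omega
  rw [this]
  rw [show (2 : ℝ) + 2 * x ^ 2 = 2 * (1 + x ^ 2) by ring, mul_pow]
  ring

theorem aword_zero {n : ℕ} (π : Equiv.Perm (Fin n)) : aword π 0 = 0 := by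
  unfold aword; rw [dif_neg (by omega)]

theorem aword_pos {n : ℕ} (π : Equiv.Perm (Fin n)) (j : ℕ) (hj : 1 ≤ j) (hj' : j ≤ n) :
    1 ≤ aword π j := by
  unfold aword; rw [dif_pos ⟨hj, hj'⟩]; omega

theorem aword_ne {n : ℕ} (π : Equiv.Perm (Fin n)) (j : ℕ) (hj : 1 ≤ j) (hj' : j + 1 ≤ n) :
    aword π j ≠ aword π (j + 1) := by
  unfold aword
  rw [dif_pos ⟨hj, by omega⟩, dif_pos ⟨by omega, hj'⟩]
  intro h
  have h' : π ⟨j - 1, by omega⟩ = π ⟨j + 1 - 1, by omega⟩ := by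
    apply Fin.ext; omega
  have := π.injective h'
  have : j - 1 = j + 1 - 1 := congrArg Fin.val this
  omega

theorem L1_eq_lpk (n : ℕ) (π : Equiv.Perm (Fin n)) :
    ((Finset.range n).filter
      (fun j => cb n (aword π) j = true ∧ cb n (aword π) (j + 1) = false)).card = lpk π := by
  unfold lpk
  apply Finset.card_bij (fun j _ => j + 1)
  · intro j hj
    obtain ⟨hjr, hj1, hj2⟩ := Finset.mem_filter.mp hj
    have hjn : j < n := Finset.mem_range.mp hjr
    have hj1' : aword π j < aword π (j + 1) := by
      rw [cb_lt n _ j hjn] at hj1; exact of_decide_eq_true hj1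
    have hlt : j + 1 < n := by
      by_contra h
      unfold cb at hj2
      rw [if_neg h] at hj2
      simp at hj2
    have hj2' : ¬ (aword π (j + 1) < aword π (j + 1 + 1)) := by
      rw [cb_lt n _ (j + 1) hlt] at hj2
      simpa using hj2
    have hne := aword_ne π (j + 1) (by omega) (by omega)
    refine Finset.mem_filter.mpr ⟨Finset.mem_Icc.mpr ⟨by omega, by omega⟩, ?_, ?_⟩
    · simpa [show j + 1 - 1 = j from rfl] using hj1'
    · omega
  · intro j1 h1 j2 h2 h; omega
  · intro i hi
    obtain ⟨hIcc, hp1, hp2⟩ := Finset.mem_filter.mp hi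
    obtain ⟨hi1, hi2⟩ := Finset.mem_Icc.mp hIcc
    have hi11 : i - 1 + 1 = i := by omega
    have hin : i < n := by omega
    refine ⟨i - 1, Finset.mem_filter.mpr ⟨Finset.mem_range.mpr (by omega), ?_, ?_⟩, hi11⟩
    · rw [cb_lt n _ (i - 1) (by omega), hi11]
      exact decide_eq_true hp1
    · rw [hi11, cb_lt n _ i hin]
      simp only [decide_eq_false_iff_not]
      omega
  
theorem lpk_le (n : ℕ) (π : Equiv.Perm (Fin n)) : 2 * lpk π ≤ n := by
  cases n with
  | zero =>
    have : lpk π = 0 := by unfold lpk; simp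
    omega
  | succ m =>
    have hc0 : cb (m + 1) (aword π) 0 = true := by
      rw [cb_lt _ _ 0 (by omega)]
      have h1 := aword_pos π 1 le_rfl (by omega)
      have h0 := aword_zero π
      apply decide_eq_true
      simp only [Nat.zero_add]
      omega
    have hb := balance (m + 1) (aword π) hc0
    have hd := disj_bound (m + 1) (aword π)
    have hl := L1_eq_lpk (m + 1) π
    omega

theorem bword_eq_sv {n : ℕ} (π : Equiv.Perm (Fin n)) (ε : Fin n → Bool) (j : ℕ) :
    bword (π, ε) j = sv (aword π) ε j := by
  unfold bword sv aword
  by_cases h : 1 ≤ j ∧ j ≤ n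
  · rw [dif_pos h, dif_pos h, dif_pos h]
    push_cast
    ring
  · rw [dif_neg h, dif_neg h]

theorem pow_altdesB (x : ℝ) {n : ℕ} (π : Equiv.Perm (Fin n)) (ε : Fin n → Bool) :
    x ^ altdesB (π, ε) = ∏ j ∈ Finset.range n, wt x (aword π) ε j := by
  have hprod : (∏ j ∈ Finset.range n, wt x (aword π) ε j)
      = x ^ ((Finset.range n).filter (fun j => acond (aword π) ε j)).card := by
    unfold wt
    rw [Finset.prod_ite (fun _ => x) (fun _ => (1 : ℝ)), Finset.prod_const, Finset.prod_const,
      one_pow, mul_one]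
  rw [hprod]
  congr 1
  unfold altdesB
  congr 1
  refine Finset.filter_congr ?_
  intro j _
  unfold acond
  rw [bword_eq_sv π ε j, bword_eq_sv π ε (j + 1)]

theorem perm_sum (x : ℝ) (n : ℕ) (π : Equiv.Perm (Fin n)) :
    (∑ ε : Fin n → Bool, x ^ altdesB (π, ε))
      = (2 + 2 * x ^ 2) ^ lpk π * (1 + x) ^ (n - 2 * lpk π) := by
  cases n with
  | zero => simp [altdesB, lpk]
  | succ m =>
    rw [Finset.sum_congr rfl (fun ε _ => pow_altdesB x π ε)]
    rw [key x (m + 1) (aword π) (aword_zero π) (fun j hj hj' => aword_pos π j hj hj')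
      (fun j hj hj' => aword_ne π j hj hj')]
    have hc0 : cb (m + 1) (aword π) 0 = true := by
      rw [cb_lt _ _ 0 (by omega)]
      have h1 := aword_pos π 1 le_rfl (by omega)
      have h0 := aword_zero π
      apply decide_eq_true
      simp only [Nat.zero_add]
      omega
    rw [prod_fac x (m + 1) (aword π) hc0, L1_eq_lpk (m + 1) π]

end Aux


/-- `B̂_n(x) = (1+x)^n · M_n((2+2x²)/(1+x)²)` for `x ≠ -1`. -/
theorem stmt8 (n : ℕ) (x : ℝ) (hx : x ≠ -1) :
    Bpoly n x = (1 + x) ^ n * Mpoly n ((2 + 2 * x ^ 2) / (1 + x) ^ 2) := by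
  have hx1 : (1 + x) ≠ 0 := fun h => hx (by linarith)
  unfold Bpoly Mpoly
  rw [Fintype.sum_prod_type]
  rw [Finset.sum_congr rfl (fun π _ => perm_sum x n π)]
  have hMsum : (∑ k ∈ Finset.range (n / 2 + 1),
        (M n k : ℝ) * ((2 + 2 * x ^ 2) / (1 + x) ^ 2) ^ k)
      = ∑ π : Equiv.Perm (Fin n), ((2 + 2 * x ^ 2) / (1 + x) ^ 2) ^ lpk π := by
    rw [eq_comm, ← Finset.sum_fiberwise_of_maps_to (g := lpk) (t := Finset.range (n / 2 + 1))
      (fun π _ => Finset.mem_range.mpr (by have := lpk_le n π; omega))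
      (fun π => ((2 + 2 * x ^ 2) / (1 + x) ^ 2) ^ lpk π)]
    refine Finset.sum_congr rfl ?_
    intro k hk
    have hconst : ∀ π ∈ Finset.univ.filter (fun π : Equiv.Perm (Fin n) => lpk π = k),
        ((2 + 2 * x ^ 2) / (1 + x) ^ 2) ^ lpk π = ((2 + 2 * x ^ 2) / (1 + x) ^ 2) ^ k := by
      intro π hπ; rw [(Finset.mem_filter.mp hπ).2]
    rw [Finset.sum_congr rfl hconst, Finset.sum_const, nsmul_eq_mul]
    rfl
  rw [hMsum, Finset.mul_sum]
  refine Finset.sum_congr rfl ?_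
  intro π _
  have h2l : 2 * lpk π ≤ n := lpk_le n π
  rw [div_pow, ← pow_mul]
  have hsplit : (1 + x) ^ n = (1 + x) ^ (n - 2 * lpk π) * (1 + x) ^ (2 * lpk π) := by
    rw [← pow_add]; congr 1; omega
  rw [hsplit]
  field_simp
end
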